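/- Let α be a weak composition with all parts ≥ 1 avoiding all patterns in KM, let m > 1, let i ∈ seg_m^1(α) with α_{i_{m-1}-1} < α_i. Then α_i ≥ α_j for all j ≥ i. -/

import Mathlib

open Finset

/-- `α` (on indices `1..n`) contains the composition pattern `β`. -/
def Contains (n : ℕ) (α : ℕ → ℕ) (β : List ℕ) : Prop :=
  ∃ j : Fin β.length → ℕ, StrictMono j ∧ (∀ s, 1 ≤ j s ∧ j s ≤ n) ∧
    (∀ s t, α (j s) ≤ α (j t) ↔ β.get s ≤ β.get t) ∧
    (∀ s t, |(β.get s : ℤ) - (β.get t : ℤ)| ≤ |(α (j s) : ℤ) - (α (j t) : ℤ)|)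

/-- `α` avoids all five patterns in `KM`. -/
def AvoidsKM (n : ℕ) (α : ℕ → ℕ) : Prop :=
  ∀ β ∈ [[0,1,2], [0,0,2,2], [0,0,2,1], [1,0,3,2], [1,0,2,2]], ¬ Contains n α β

/-- Evaluation of `α` with the convention `α_t = 0` for `t > n`. -/
def Aev (n : ℕ) (α : ℕ → ℕ) (t : ℕ) : ℕ := if t ≤ n then α t else 0

/-- `p = i_{m-1}` and `q = i_m` are consecutive segment boundaries of `α`,
so that `seg_m(α) = {p, ..., q-1}`. -/
def SegData (n : ℕ) (α : ℕ → ℕ) (p q : ℕ) : Prop :=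
  (p = 1 ∨ (2 ≤ p ∧ p ≤ n ∧ α (p - 1) < α p)) ∧ p < q ∧ q ≤ n + 1 ∧
  (∀ t, p < t → t < q → α t ≤ α (t - 1)) ∧
  (q = n + 1 ∨ (q ≤ n ∧ α (q - 1) < α q))

theorem le_of_antitone_run {β : Type*} [Preorder β] {f : ℕ → β} {p q : ℕ}
    (hrun : ∀ t, p < t → t < q → f t ≤ f (t - 1)) {i j : ℕ} (hpi : p ≤ i) (hij : i ≤ j)
    (hjq : j < q) : f j ≤ f i := by
  induction j, hij using Nat.le_induction with
  | base => exact le_rfl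
  | succ j hij ih => exact (hrun (j + 1) (by omega) hjq).trans (ih (by omega))

theorem contains_012_of_lt {n : ℕ} {α : ℕ → ℕ} {a b c : ℕ} (ha : 1 ≤ a) (hab : a < b)
    (hbc : b < c) (hcn : c ≤ n) (hαab : α a < α b) (hαbc : α b < α c) :
    Contains n α [0, 1, 2] := by
  refine ⟨![a, b, c], ?_, ?_, ?_, ?_⟩
  · intro s t hst
    fin_cases s <;> fin_cases t <;> simp at hst ⊢ <;> omega
  · intro s
    fin_cases s <;> simp <;> omega
  · intro s t
    fin_cases s <;> fin_cases t <;> simp <;> omega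
  · intro s t
    fin_cases s <;> fin_cases t <;> simp <;> rw [le_abs] <;> omega

theorem stmt7_general (n : ℕ) (α : ℕ → ℕ)
    (hav : AvoidsKM n α) (p q : ℕ) (hseg : SegData n α p q) (hp2 : 2 ≤ p)
    (i : ℕ) (hpi : p ≤ i) (hiq : i < q)
    (hlt : α (p - 1) < α i) :
    ∀ j, i ≤ j → j ≤ n → α j ≤ α i := by
  obtain ⟨-, -, -, hrun, -⟩ := hseg
  intro j hij hjn
  by_contra! hgt
  -- `α j > α i` is impossible inside the weakly decreasing segment, so `j` lies beyond it.
  have hjq : q ≤ j := by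
    by_contra! hjq
    exact (le_of_antitone_run hrun hpi hij hjq).not_gt hgt
  exact hav [0, 1, 2] (by simp)
    (contains_012_of_lt (by omega) (by omega) (by omega) hjn hlt hgt)

theorem stmt7 (n : ℕ) (α : ℕ → ℕ) (hpos : ∀ i, 1 ≤ i → i ≤ n → 1 ≤ α i)
    (hav : AvoidsKM n α) (p q : ℕ) (hseg : SegData n α p q) (hp2 : 2 ≤ p)
    (i : ℕ) (hpi : p ≤ i) (hiq : i < q) (hseg1 : Aev n α q ≤ α i)
    (hlt : α (p - 1) < α i) :
    ∀ j, i ≤ j → j ≤ n → α j ≤ α i :=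
  stmt7_general n α hav p q hseg hp2 i hpi hiq hlt
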